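/- arXiv:2106.11117 — 3 statements merged into one kernel-verified Lean document; each statement's English description precedes it below -/
import Mathlib

section
/- Fix integers \(d \ge 1\) and real \(s \ge 1\), and for integers \(m \ge 2\) define \(F_m(q) = \dfrac{m^{d}\left((q+1)^s - q^s\right)}{m^{d} + q^{d}\left((q+1)^s - q^s - 1\right)}\) for real \(q \in [1, m]\). If \(s > 1\), then the continuous function \(G_m(q) := \) (derivative condition) \(s\left((q+1)^{s-1} - q^{s-1}\right)\left(m^d + q^d\left((q+1)^s - q^s - 1\right)\right) - \left((q+1)^s - q^s\right)q^{d-1}\left(d\left((q+1)^s - q^s - 1\right) + s q\left((q+1)^{s-1} - q^{s-1}\right)\right)\) is positive at \(q = 1\) for \(m\) sufficiently large and negative at \(q = m\) for \(m\) sufficiently large, hence has a root \(q^{opt} \in (1, m)\). -/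
/-- For `x ≥ 1` and `s > 1`, `(x+1)^s - x^s > 1`. -/
lemma aux_gap_gt_one (s : ℝ) (hs : 1 < s) (x : ℝ) (hx : 1 ≤ x) :
    1 < (x + 1) ^ s - x ^ s := by
  have hx0 : 0 < x := lt_of_lt_of_le one_pos hx
  have hx10 : 0 < x + 1 := by linarith
  have h1 : (x + 1) ^ s = (x + 1) ^ (s - 1) * (x + 1) := by
    rw [show s = (s - 1) + 1 by ring, Real.rpow_add hx10, Real.rpow_one]
    ring_nf
  have h2 : x ^ (s - 1) * x = x ^ s := by
    nth_rewrite 2 [show x = x ^ (1:ℝ) by rw [Real.rpow_one]]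
    rw [← Real.rpow_add hx0]; ring_nf
  have hmono : x ^ (s - 1) ≤ (x + 1) ^ (s - 1) :=
    Real.rpow_le_rpow (le_of_lt hx0) (by linarith) (by linarith)
  have hgt1 : 1 < (x + 1) ^ (s - 1) :=
    Real.one_lt_rpow_iff_of_pos hx10 |>.mpr (Or.inl ⟨by linarith, by linarith⟩)
  nlinarith [mul_le_mul_of_nonneg_right hmono (le_of_lt hx0)]

/-- For `s > 1` and `m` large, the derivative numerator `G_m` of the graded-mesh
speed-up ratio is positive at `q = 1` and negative at `q = m`, hence has a root
`q^opt ∈ (1, m)`. -/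
theorem graded_mesh_optimal_layer_exists (d : ℕ) (hd : 1 ≤ d) (s : ℝ) (hs : 1 < s)
    (G : ℕ → ℝ → ℝ)
    (hG : ∀ (m : ℕ) (q : ℝ), G m q =
      s * ((q + 1) ^ (s - 1) - q ^ (s - 1)) *
          ((m : ℝ) ^ (d : ℝ) + q ^ (d : ℝ) * ((q + 1) ^ s - q ^ s - 1))
        - ((q + 1) ^ s - q ^ s) * q ^ ((d : ℝ) - 1) *
          ((d : ℝ) * ((q + 1) ^ s - q ^ s - 1)
            + s * q * ((q + 1) ^ (s - 1) - q ^ (s - 1)))) :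
    ∃ M : ℕ, ∀ m : ℕ, M ≤ m →
      0 < G m 1 ∧ G m m < 0 ∧ ∃ q ∈ Set.Ioo (1 : ℝ) (m : ℝ), G m q = 0 := by
  have h2s1 : (1:ℝ) < 2 ^ (s - 1) :=
    Real.one_lt_rpow_iff_of_pos (by norm_num) |>.mpr (Or.inl ⟨by norm_num, by linarith⟩)
  have hc1 : 0 < s * (2 ^ (s - 1) - 1) := by nlinarith
  set c1 : ℝ := s * (2 ^ (s - 1) - 1) with hc1def
  set C : ℝ := (2 ^ s - 1) * ((d : ℝ) * (2 ^ s - 1 - 1) + s * 1 * (2 ^ (s - 1) - 1)) with hCdef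
  obtain ⟨M0, hM0⟩ := exists_nat_gt ((C - c1 * (2 ^ s - 1 - 1)) / c1)
  refine ⟨max M0 2, fun m hm => ?_⟩
  have hm2 : 2 ≤ m := le_trans (le_max_right _ _) hm
  have hmR : (2:ℝ) ≤ (m:ℝ) := by exact_mod_cast hm2
  have hm1R : (1:ℝ) ≤ (m:ℝ) := by linarith
  have hmpos : (0:ℝ) < m := by linarith
  -- value at 1
  have hG1 : G m 1 = c1 * ((m:ℝ) ^ (d:ℝ) + (2 ^ s - 1 - 1)) - C := by
    rw [hG m 1]
    simp [Real.one_rpow]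
    rw [hc1def, hCdef]
    ring
  have hmd : (m:ℝ) ≤ (m:ℝ) ^ (d:ℝ) := by
    calc (m:ℝ) = (m:ℝ) ^ (1:ℝ) := (Real.rpow_one _).symm
    _ ≤ (m:ℝ) ^ (d:ℝ) := Real.rpow_le_rpow_of_exponent_le hm1R (by exact_mod_cast hd)
  have hM0m : ((C - c1 * (2 ^ s - 1 - 1)) / c1) < (m:ℝ) := by
    have : (M0:ℝ) ≤ (m:ℝ) := by exact_mod_cast le_trans (le_max_left _ _) hm
    linarith
  have hpos1 : 0 < G m 1 := by
    rw [hG1]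
    have h := (div_lt_iff₀ hc1).mp hM0m
    nlinarith [hmd]
  -- value at m
  have hA := aux_gap_gt_one s hs (m:ℝ) hm1R
  have hGm : G m m < 0 := by
    have hXpos : (0:ℝ) < (m:ℝ) ^ ((d:ℝ) - 1) := Real.rpow_pos_of_pos hmpos _
    have hxd : (m:ℝ) ^ (d:ℝ) = (m:ℝ) ^ ((d:ℝ) - 1) * (m:ℝ) := by
      nth_rewrite 3 [show (m:ℝ) = (m:ℝ) ^ (1:ℝ) by rw [Real.rpow_one]]
      rw [← Real.rpow_add hmpos]; ring_nf
    rw [hG m m]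
    set A := ((m:ℝ) + 1) ^ s - (m:ℝ) ^ s with hAdef
    set B := ((m:ℝ) + 1) ^ (s - 1) - (m:ℝ) ^ (s - 1) with hBdef
    set X := (m:ℝ) ^ ((d:ℝ) - 1) with hXdef
    rw [hxd]
    have hkey : s * B * (X * (m:ℝ) + X * (m:ℝ) * (A - 1))
        - A * X * ((d:ℝ) * (A - 1) + s * (m:ℝ) * B)
        = -(d:ℝ) * A * (A - 1) * X := by ring
    rw [show (X * (m:ℝ) : ℝ) = X * (m:ℝ) from rfl]
    calc s * B * (X * (m:ℝ) + X * (m:ℝ) * (A - 1))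
          - A * X * ((d:ℝ) * (A - 1) + s * (m:ℝ) * B)
        = -(d:ℝ) * A * (A - 1) * X := hkey
      _ < 0 := by
          have hd1 : (1:ℝ) ≤ (d:ℝ) := by exact_mod_cast hd
          have hApos : (0:ℝ) < A := by linarith
          have := mul_pos (mul_pos (mul_pos (show (0:ℝ) < (d:ℝ) by linarith) hApos)
            (show (0:ℝ) < A - 1 by linarith)) hXpos
          linarith
  -- IVT
  refine ⟨hpos1, hGm, ?_⟩
  have hcont : ContinuousOn (G m) (Set.Icc (1:ℝ) (m:ℝ)) := by
    intro q hq
    have hq0 : q ≠ 0 := by have := hq.1; intro h; rw [h] at this; linarith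
    have hq10 : q + 1 ≠ 0 := by have := hq.1; intro h; nlinarith [hq.1]
    have : ContinuousAt (G m) q := by
      have hfun : G m = fun q => s * ((q + 1) ^ (s - 1) - q ^ (s - 1)) *
          ((m : ℝ) ^ (d : ℝ) + q ^ (d : ℝ) * ((q + 1) ^ s - q ^ s - 1))
        - ((q + 1) ^ s - q ^ s) * q ^ ((d : ℝ) - 1) *
          ((d : ℝ) * ((q + 1) ^ s - q ^ s - 1)
            + s * q * ((q + 1) ^ (s - 1) - q ^ (s - 1))) := funext (hG m)
      rw [hfun]
      have hid : ContinuousAt (fun q : ℝ => q) q := continuousAt_id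
      have h1 : ContinuousAt (fun q : ℝ => q + 1) q := hid.add continuousAt_const
      have r1 := h1.rpow_const (p := s - 1) (Or.inl hq10)
      have r2 := hid.rpow_const (p := s - 1) (Or.inl hq0)
      have r3 := h1.rpow_const (p := s) (Or.inl hq10)
      have r4 := hid.rpow_const (p := s) (Or.inl hq0)
      have r5 := hid.rpow_const (p := (d:ℝ)) (Or.inl hq0)
      have r6 := hid.rpow_const (p := (d:ℝ) - 1) (Or.inl hq0)
      exact (((continuousAt_const.mul (r1.sub r2)).mul
        (continuousAt_const.add (r5.mul ((r3.sub r4).sub continuousAt_const)))).sub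
        (((r3.sub r4).mul r6).mul
          ((continuousAt_const.mul ((r3.sub r4).sub continuousAt_const)).add
            ((continuousAt_const.mul hid).mul (r1.sub r2)))))
    exact this.continuousWithinAt
  have hsub := intermediate_value_Ioo' hm1R hcont
  have h0mem : (0:ℝ) ∈ Set.Ioo (G m m) (G m 1) := ⟨hGm, hpos1⟩
  obtain ⟨q, hqmem, hq0⟩ := hsub h0mem
  exact ⟨q, hqmem, hq0⟩
end

section
/- Let \(d \ge 1\), \(s \ge 1\) and define the LTS cost on a graded mesh with \(m\) layers and splitting parameter \(q\in[1,m]\) by \(\mathcal{C}(m,q) = q^d m^s + (m^d - q^d)\dfrac{m^s}{(q+1)^s - q^s}\). Then with the choice \(q = q(m) = m^{d/(d+s-1)}\), there exists a constant \(K = K(d,s) > 0\) such that \(\mathcal{C}(m, q(m)) \le K\, m^{s + d^2/(d+s-1)}\) for all sufficiently large \(m\). -/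
/-- With the splitting choice `q(m) = m^{d/(d+s-1)}`, the local time-stepping cost on a
graded mesh with `m` layers is `O(m^{s + d²/(d+s-1)})`. -/
theorem lts_graded_cost_bound (d : ℕ) (hd : 1 ≤ d) (s : ℝ) (hs : 1 ≤ s)
    (C : ℝ → ℝ → ℝ)
    (hC : ∀ m q, C m q = q ^ (d : ℝ) * m ^ s
      + (m ^ (d : ℝ) - q ^ (d : ℝ)) * (m ^ s / ((q + 1) ^ s - q ^ s))) :
    ∃ K > 0, ∃ M : ℝ, ∀ m : ℝ, M ≤ m →
      C m (m ^ ((d : ℝ) / ((d : ℝ) + s - 1)))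
        ≤ K * m ^ (s + (d : ℝ) ^ 2 / ((d : ℝ) + s - 1)) := by
  have hd1 : (1:ℝ) ≤ (d:ℝ) := by exact_mod_cast hd
  set a : ℝ := (d : ℝ) + s - 1 with ha_def
  have ha : 1 ≤ a := by simp only [ha_def]; linarith
  have ha0 : 0 < a := lt_of_lt_of_le one_pos ha
  set e : ℝ := (d:ℝ) / a with he_def
  have he0 : 0 ≤ e := div_nonneg (by positivity) ha0.le
  have he1 : e ≤ 1 := by
    rw [he_def, div_le_one ha0]; simp only [ha_def]; linarith
  refine ⟨2, by norm_num, 1, fun m hm => ?_⟩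
  have hm0 : 0 < m := lt_of_lt_of_le one_pos hm
  set q : ℝ := m ^ e with hq_def
  have hq1 : 1 ≤ q := by
    rw [hq_def]
    calc (1:ℝ) = 1 ^ e := (Real.one_rpow e).symm
      _ ≤ m ^ e := Real.rpow_le_rpow zero_le_one hm he0
  have hq0 : 0 < q := lt_of_lt_of_le one_pos hq1
  have hs1 : 0 ≤ s - 1 := by linarith
  -- denominator bound : (q+1)^s - q^s ≥ q^(s-1)
  have hden : q ^ (s-1) ≤ (q+1) ^ s - q ^ s := by
    have h1 : q ^ (s-1) * q = q ^ s := by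
      rw [← Real.rpow_add_one hq0.ne' (s-1)]; ring_nf
    have h2 : (q+1) ^ s = (q+1) ^ (s-1) * (q+1) := by
      rw [← Real.rpow_add_one (by positivity) (s-1)]; ring_nf
    have h3 : q ^ (s-1) ≤ (q+1) ^ (s-1) :=
      Real.rpow_le_rpow hq0.le (by linarith) hs1
    have h4 : q ^ (s-1) * (q+1) ≤ (q+1) ^ (s-1) * (q+1) := by
      apply mul_le_mul_of_nonneg_right h3 (by linarith)
    nlinarith [h1, h2, h4]
  have hdenpos : 0 < (q+1) ^ s - q ^ s :=
    lt_of_lt_of_le (Real.rpow_pos_of_pos hq0 _) hden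
  -- first term
  have hqd : q ^ (d:ℝ) = m ^ (e * (d:ℝ)) := by
    rw [hq_def, Real.rpow_mul hm0.le]
  have hexp1 : e * (d:ℝ) = (d:ℝ)^2 / a := by
    rw [he_def]; field_simp
  have hT1 : q ^ (d:ℝ) * m ^ s = m ^ (s + (d:ℝ)^2 / a) := by
    rw [hqd, hexp1, ← Real.rpow_add hm0]; ring_nf
  -- second term
  have hqs : q ^ (s-1) = m ^ (e * (s-1)) := by
    rw [hq_def, Real.rpow_mul hm0.le]
  have hT2 : (m ^ (d:ℝ) - q ^ (d:ℝ)) * (m ^ s / ((q+1) ^ s - q ^ s))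
      ≤ m ^ (s + (d:ℝ)^2 / a) := by
    have hfac1 : m ^ (d:ℝ) - q ^ (d:ℝ) ≤ m ^ (d:ℝ) := by
      have : 0 ≤ q ^ (d:ℝ) := Real.rpow_nonneg hq0.le _
      linarith
    have hfac2 : m ^ s / ((q+1) ^ s - q ^ s) ≤ m ^ s / q ^ (s-1) :=
      div_le_div_of_nonneg_left (Real.rpow_nonneg hm0.le s)
        (Real.rpow_pos_of_pos hq0 _) hden
    have hfac2nn : 0 ≤ m ^ s / ((q+1) ^ s - q ^ s) :=
      div_nonneg (Real.rpow_nonneg hm0.le s) hdenpos.le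
    have hkey : (m ^ (d:ℝ) - q ^ (d:ℝ)) * (m ^ s / ((q+1) ^ s - q ^ s))
        ≤ m ^ (d:ℝ) * (m ^ s / q ^ (s-1)) :=
      mul_le_mul hfac1 hfac2 hfac2nn (Real.rpow_nonneg hm0.le _)
    refine hkey.trans (le_of_eq ?_)
    rw [hqs, ← Real.rpow_sub hm0, ← Real.rpow_add hm0]
    congr 1
    rw [he_def]; field_simp; ring
  rw [hC]
  linarith [hT1, hT2]
end

section
/- The single-solve speed-up \(S(p) = \dfrac{p\left((1-r) + r p^d\right)}{(1-r) + r p^{d+1}}\) of LTS over standard LF, as a function of real \(p \ge 1\) with fixed \(r \in (0,1)\) and \(d \ge 1\), satisfies \(S(1) = 1\) and \(S(p) = \frac{rp^{d+1} + (1-r)p}{rp^{d+1} + (1-r)} \to 1\) as \(p \to \infty\). Moreover \(S(p) > 1\) for all \(p > 1\), and \(S\) attains a maximum at some finite \(p^* \in (1,\infty)\). -/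
/-- The single-solve speed-up `S(p) = p((1-r) + r p^d)/((1-r) + r p^{d+1})` of LTS over
standard leapfrog satisfies `S(1) = 1`, `S(p) > 1` for `p > 1`, `S(p) → 1` as `p → ∞`,
and `S` attains a maximum at some finite `p* ∈ (1, ∞)`. -/
theorem lts_speedup_properties (d : ℕ) (hd : 1 ≤ d) (r : ℝ)
    (hr : r ∈ Set.Ioo (0 : ℝ) 1) (S : ℝ → ℝ)
    (hS : ∀ p : ℝ, S p = p * ((1 - r) + r * p ^ d) / ((1 - r) + r * p ^ (d + 1))) :
    S 1 = 1 ∧ (∀ p : ℝ, 1 < p → 1 < S p) ∧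
    Filter.Tendsto S Filter.atTop (nhds 1) ∧
    ∃ pstar : ℝ, 1 < pstar ∧ ∀ p : ℝ, 1 ≤ p → S p ≤ S pstar := by
  obtain ⟨hr0, hr1⟩ := hr
  have hr1' : 0 < 1 - r := by linarith
  have hden : ∀ p : ℝ, 0 ≤ p → 0 < (1 - r) + r * p ^ (d + 1) := by
    intro p hp
    have : 0 ≤ r * p ^ (d + 1) := by positivity
    linarith
  have hS1 : S 1 = 1 := by
    rw [hS]; simp
  have hgt : ∀ p : ℝ, 1 < p → 1 < S p := by
    intro p hp
    have hp0 : (0:ℝ) ≤ p := by linarith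
    have hD := hden p hp0
    rw [hS, lt_div_iff₀ hD]
    have hpd : (1:ℝ) ≤ p ^ d := one_le_pow₀ (le_of_lt hp)
    have key : p * ((1 - r) + r * p ^ d) - (1 * ((1 - r) + r * p ^ (d + 1)))
        = (1 - r) * (p - 1) := by ring
    nlinarith [mul_pos hr1' (sub_pos.mpr hp)]
  have hlimS : Filter.Tendsto S Filter.atTop (nhds 1) := by
    have hlim : Filter.Tendsto
        (fun p : ℝ => ((1 - r) / p ^ d + r) / ((1 - r) / p ^ (d + 1) + r))
        Filter.atTop (nhds 1) := by
      have h1 : Filter.Tendsto (fun p : ℝ => (1 - r) / p ^ d)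
          Filter.atTop (nhds 0) := by
        have := (Filter.tendsto_pow_atTop (α := ℝ) (n := d) (by omega)).inv_tendsto_atTop
        simpa [div_eq_mul_inv] using this.const_mul (1 - r)
      have h2 : Filter.Tendsto (fun p : ℝ => (1 - r) / p ^ (d + 1))
          Filter.atTop (nhds 0) := by
        have := (Filter.tendsto_pow_atTop (α := ℝ) (n := d + 1) (by omega)).inv_tendsto_atTop
        simpa [div_eq_mul_inv] using this.const_mul (1 - r)
      have := (h1.add (tendsto_const_nhds (x := r))).div (h2.add (tendsto_const_nhds (x := r)))
        (by simpa using hr0.ne')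
      simp only [zero_add, div_self hr0.ne'] at this; exact this
    refine hlim.congr' ?_
    filter_upwards [Filter.eventually_gt_atTop (0:ℝ)] with p hp
    rw [hS]
    have hpd : (p:ℝ) ^ d ≠ 0 := by positivity
    have hpd1 : (p:ℝ) ^ (d + 1) ≠ 0 := by positivity
    field_simp
    ring
  refine ⟨hS1, hgt, hlimS, ?_⟩
  -- existence of maximizer
  have h2 : 1 < S 2 := hgt 2 (by norm_num)
  have hev : ∀ᶠ p in Filter.atTop, S p < S 2 :=
    hlimS.eventually_lt_const h2
  obtain ⟨M, hM⟩ := Filter.eventually_atTop.mp hev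
  set M' := max M 2 with hM'
  have hcont : ContinuousOn S (Set.Icc 1 M') := by
    have : S = fun p => p * ((1 - r) + r * p ^ d) / ((1 - r) + r * p ^ (d + 1)) :=
      funext hS
    rw [this]
    apply ContinuousOn.div
    · fun_prop
    · fun_prop
    · intro x hx
      exact (hden x (by linarith [hx.1])).ne'
  obtain ⟨pstar, hps, hmax⟩ := (isCompact_Icc.exists_isMaxOn
    ⟨1, Set.mem_Icc.mpr ⟨le_refl 1, le_trans one_le_two (le_max_right M 2)⟩⟩ hcont)
  have h2mem : (2:ℝ) ∈ Set.Icc 1 M' := ⟨by norm_num, le_max_right _ _⟩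
  have hS2le : S 2 ≤ S pstar := hmax h2mem
  have hps1 : 1 < pstar := by
    rcases lt_or_eq_of_le hps.1 with h | h
    · exact h
    · exfalso; rw [← h, hS1] at hS2le; linarith
  refine ⟨pstar, hps1, fun p hp => ?_⟩
  by_cases hpM : p ≤ M'
  · exact hmax ⟨hp, hpM⟩
  · have : S p < S 2 := hM p (le_trans (le_max_left _ _) (le_of_lt (not_le.mp hpM)))
    linarith
end
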